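/- Let α = Ω·α̃ > 0 be a multiple of Ω, β < Ω, and τ = τ(α) < Ω. Suppose α+β ∈ ε̂_{Ω+1} ∩ JUMP(X). If (τ_n)_{n<ω} is a strictly increasing sequence with supremum τ, then the sequence (Θ_X(α[τ_n] + Θ*(α+β)))_{n<ω} is strictly increasing with supremum Θ_X(α+β). -/

import Mathlib

open Ordinal Set

noncomputable section
open scoped Classical

/-- `Ω`, the first uncountable ordinal. -/
def OmegaO : Ordinal := (Cardinal.aleph 1).ord

/-- `ε_{Ω+1}`, the least `ε > Ω` with `ω ^ ε = ε`. -/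
def epsOmega : Ordinal := nfp (fun a => Ordinal.omega0 ^ a) (OmegaO + 1)

lemma omega0_le_OmegaO : Ordinal.omega0 ≤ OmegaO := by
  rw [OmegaO, ← Cardinal.ord_aleph0]
  exact Cardinal.ord_le_ord.2 (Cardinal.aleph0_le_aleph 1)

lemma one_lt_OmegaO : 1 < OmegaO :=
  lt_of_lt_of_le Ordinal.one_lt_omega0 omega0_le_OmegaO

lemma OmegaO_pos : 0 < OmegaO := lt_trans zero_lt_one one_lt_OmegaO

/-- `ξ*`, the maximal coefficient in the `Ω`-normal form of `ξ`. -/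
def star (ξ : Ordinal) : Ordinal :=
  if h0 : ξ = 0 then 0
  else if hl : log OmegaO ξ < ξ then
    max (max (star (log OmegaO ξ)) (star (ξ % OmegaO ^ log OmegaO ξ)))
      (ξ / OmegaO ^ log OmegaO ξ)
  else 0
termination_by ξ
decreasing_by
  · exact hl
  · exact mod_opow_log_lt_self _ h0

/-- The generalized fundamental sequence `ξ[θ]`. -/
def fs (ξ θ : Ordinal) : Ordinal :=
  if h0 : ξ ≤ 1 then 0
  else if hmod : ξ % OmegaO ^ log OmegaO ξ ≠ 0 then
    OmegaO ^ log OmegaO ξ * (ξ / OmegaO ^ log OmegaO ξ) + fs (ξ % OmegaO ^ log OmegaO ξ) θ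
  else if Order.IsSuccLimit (ξ / OmegaO ^ log OmegaO ξ) then OmegaO ^ log OmegaO ξ * θ
  else if hβ : ξ / OmegaO ^ log OmegaO ξ = 1 then
    (if hlog : Order.IsSuccLimit (log OmegaO ξ) then
       (if hll : log OmegaO ξ < ξ then OmegaO ^ fs (log OmegaO ξ) θ else 0)
     else OmegaO ^ Ordinal.pred (log OmegaO ξ) * θ)
  else
    OmegaO ^ log OmegaO ξ * Ordinal.pred (ξ / OmegaO ^ log OmegaO ξ) + fs (OmegaO ^ log OmegaO ξ) θ
termination_by ξ
decreasing_by
  · exact mod_opow_log_lt_self _ (by intro h; exact h0 (by simp [h]))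
  · exact hll
  · -- `Ω ^ log Ω ξ < ξ`
    have hξ0 : ξ ≠ 0 := by intro h; exact h0 (by simp [h])
    have hle : OmegaO ^ log OmegaO ξ ≤ ξ := opow_log_le_self _ hξ0
    have hpos : 0 < OmegaO ^ log OmegaO ξ :=
      opow_pos _ OmegaO_pos
    have hβ0 : 0 < ξ / OmegaO ^ log OmegaO ξ :=
      Ordinal.div_pos (by positivity) |>.2 hle
    have hβ1 : 1 < ξ / OmegaO ^ log OmegaO ξ :=
      lt_of_le_of_ne (Ordinal.one_le_iff_ne_zero.2 hβ0.ne') (Ne.symm hβ)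
    calc OmegaO ^ log OmegaO ξ = OmegaO ^ log OmegaO ξ * 1 := (mul_one _).symm
      _ < OmegaO ^ log OmegaO ξ * (ξ / OmegaO ^ log OmegaO ξ) := by
          exact mul_lt_mul_of_pos_left hβ1 hpos
      _ ≤ ξ := Ordinal.mul_div_le _ _

/-- The terminal part `τ(ξ)`. -/
def tau (ξ : Ordinal) : Ordinal :=
  if h0 : ξ = 0 then 0
  else if hmod : ξ % OmegaO ^ log OmegaO ξ ≠ 0 then tau (ξ % OmegaO ^ log OmegaO ξ)
  else if Order.IsSuccLimit (ξ / OmegaO ^ log OmegaO ξ) then ξ / OmegaO ^ log OmegaO ξ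
  else if log OmegaO ξ = 0 then 1
  else if hlog : Order.IsSuccLimit (log OmegaO ξ) then
    (if hll : log OmegaO ξ < ξ then tau (log OmegaO ξ) else 0)
  else OmegaO
termination_by ξ
decreasing_by
  · exact mod_opow_log_lt_self _ h0
  · exact hll

/-- The collapsing function `Θ_X`. -/
def ThetaF (X : Set Ordinal) (ξ : Ordinal) : Ordinal :=
  sInf {θ | θ ∈ X ∧ star ξ < θ ∧ ∀ ζ, ζ < ξ → star ζ < θ → ThetaF X ζ < θ}
termination_by ξ
decreasing_by exact by assumption

/-- `Ω_n`: the tower `Ω_0 = 1`, `Ω_{n+1} = Ω ^ Ω_n`. -/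
def OmegaTow : ℕ → Ordinal
  | 0 => 1
  | n + 1 => OmegaO ^ OmegaTow n

/-- `Θ_X(ε_{Ω+1}) = sup_n Θ_X(Ω_n)`. -/
def ThetaEps (X : Set Ordinal) : Ordinal := ⨆ n : ℕ, ThetaF X (OmegaTow n)

/-- `ε̂_{Ω+1}`. -/
def hatEps (X : Set Ordinal) : Set Ordinal :=
  {ξ | ξ < epsOmega ∧ star ξ < ThetaEps X}

/-- `X` is a club in `Ω`. -/
def IsClubBelowOmega (X : Set Ordinal) : Prop :=
  (∀ x ∈ X, x < OmegaO) ∧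
  (∀ a, a < OmegaO → ∃ x ∈ X, a < x) ∧
  (∀ S : Set Ordinal, S ⊆ X → S.Nonempty → sSup S < OmegaO → sSup S ∈ X)

/-- The set of limit points of `X` (below `Ω`). -/
def limitPtsOf (X : Set Ordinal) : Set Ordinal :=
  {x | 0 < x ∧ ∀ y, y < x → ∃ z ∈ X, y < z ∧ z < x}

/-- `FIX(X)`. -/
def FIXs (X : Set Ordinal) : Set Ordinal :=
  {ξ | ξ < epsOmega ∧ star (fs ξ 1) < star ξ ∧ star ξ = tau ξ ∧
    ∃ γ, ξ < γ ∧ γ < epsOmega ∧ star ξ = ThetaF X γ}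

/-- `JUMP(X)`. -/
def JUMPs (X : Set Ordinal) : Set Ordinal :=
  {0} ∪ {ξ | ∃ ζ, ξ = ζ + 1} ∪ FIXs X

/-- `Θ*`. -/
def ThetaStarF (X : Set Ordinal) (ξ : Ordinal) : Ordinal :=
  if ∃ ζ, ξ = ζ + 1 then ThetaF X (Ordinal.pred ξ)
  else if ξ ∈ FIXs X then tau ξ
  else 0

/-- `ξ̌`. -/
def checkF (X : Set Ordinal) (ξ : Ordinal) : Ordinal :=
  if 0 < ThetaStarF X ξ then OmegaO * (ξ / OmegaO) else ξ

/-- `ℙ`, the club of countable additively indecomposable ordinals. -/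
def PP : Set Ordinal := {x | x < OmegaO ∧ ∃ a, x = Ordinal.omega0 ^ a}

/-- `1 + Ord`, the club of nonzero countable ordinals. -/
def oneOrdS : Set Ordinal := {x | 0 < x ∧ x < OmegaO}

/-- `Θ^{(i)}(ξ)`. -/
def ThetaIter (X : Set Ordinal) (ξ : Ordinal) : ℕ → Ordinal
  | 0 => ThetaStarF X ξ
  | n + 1 => ThetaF X (fs (checkF X ξ) (ThetaIter X ξ n))

/-- A Buchholz system of fundamental sequences for `Θ_X`. -/
def IsBuchholz (X : Set Ordinal) (B : Ordinal → ℕ → Ordinal) : Prop :=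
  (∀ n, B 0 n = 0) ∧
  (∀ α ξ n, ξ ∈ hatEps X → OmegaO ≤ ξ → tau ξ < OmegaO → ξ = fs α (tau ξ) →
    B ξ n = fs α (B (tau ξ) n)) ∧
  (∀ ξ n, ξ ∈ hatEps X → 0 < tau (checkF X ξ) → tau (checkF X ξ) < OmegaO →
    B (ThetaF X ξ) n = ThetaF X (B (checkF X ξ) n + ThetaStarF X ξ)) ∧
  (∀ ξ n, ξ ∈ hatEps X → tau (checkF X ξ) = OmegaO →
    B (ThetaF X ξ) n = ThetaIter X ξ n)

/-- The additional clause for the `σ = Θ_{1+Ord}` Buchholz system. -/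
def SigmaExtra (B : Ordinal → ℕ → Ordinal) : Prop :=
  ∀ β n, β < OmegaO → B (ThetaF oneOrdS β) n = β

/-- The additional clauses for the `ϑ = Θ_ℙ` Buchholz system. -/
def VarthetaExtra (B : Ordinal → ℕ → Ordinal) : Prop :=
  (∀ α β n, 0 < β → (∀ α' < α, α' + β < α + β) → B (α + β) n = α + B β n) ∧
  (∀ β n, β < OmegaO → β ∈ JUMPs PP → B (ThetaF PP β) n = ThetaStarF PP β * n)



/-!
Write `T = Θ*(α+β)` and `ξₙ = α[τₙ] + T`. Because `α` is a multiple of `Ω` whose terminal part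
`τ(α)` is a countable limit, `θ ↦ α[θ]` is strictly increasing on `θ ≤ τ(α)` in steps of at
least `Ω`, ends in `α[τ(α)] = α`, is cofinal in `α`, and has coefficients at most `max(α*, θ)`;
moreover `α[θ]` is a multiple of `Ω` up to a summand `1`, which `T ≥ ω` absorbs. Hence the `ξₙ`
increase strictly below `α` and all have `ξₙ* = T`. In both cases `α+β ∈ Succ` and
`α+β ∈ FIX(X)` one checks `(α+β)* ≤ T < Θ_X(α+β)` and `Θ_X(α+ζ) ≤ T` for `ζ < β`. So the
`Θ_X(ξₙ)` increase strictly below `Θ_X(α+β)`, and their supremum lies in the club `X` and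
satisfies the closure condition defining `Θ_X(α+β)`: every `ζ < α+β` lies below some `ξₙ` or
has `Θ_X(ζ) ≤ T`.
-/

universe u

/-! ### `Ω` and `ε_{Ω+1}` -/

section OmegaArith

lemma isSuccLimit_OmegaO : Order.IsSuccLimit (OmegaO : Ordinal.{u}) :=
  Cardinal.isSuccLimit_ord (Cardinal.aleph0_le_aleph 1)

lemma add_lt_OmegaO {x y : Ordinal.{u}} (hx : x < OmegaO) (hy : y < OmegaO) :
    x + y < OmegaO :=
  Ordinal.isPrincipal_add_ord (Cardinal.aleph0_le_aleph 1) hx hy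

lemma isPrincipal_add_OmegaO_opow (a : Ordinal.{u}) : IsPrincipal (· + ·) (OmegaO ^ a) :=
  isPrincipal_add_opow_of_isPrincipal_add
    (Ordinal.isPrincipal_add_ord (Cardinal.aleph0_le_aleph 1)) a

lemma OmegaO_opow_ne_zero (a : Ordinal.{u}) : OmegaO ^ a ≠ 0 :=
  Ordinal.opow_ne_zero a OmegaO_pos.ne'

lemma OmegaO_le_opow {a : Ordinal.{u}} (ha : a ≠ 0) : OmegaO ≤ OmegaO ^ a :=
  Ordinal.left_le_opow _ (pos_iff_ne_zero.2 ha)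

lemma OmegaO_opow_add_OmegaO_le {x y : Ordinal.{u}} (h : x < y) :
    OmegaO ^ x + OmegaO ≤ OmegaO ^ y :=
  calc OmegaO ^ x + OmegaO
      ≤ OmegaO ^ x + OmegaO ^ x * OmegaO := by
        gcongr; exact Ordinal.le_mul_right _ (Ordinal.opow_pos x OmegaO_pos)
    _ = OmegaO ^ (x + 1) := by
        rw [← mul_one_add, Ordinal.one_add_of_omega0_le omega0_le_OmegaO, Ordinal.opow_add,
          Ordinal.opow_one]
    _ ≤ OmegaO ^ y := Ordinal.opow_le_opow_right OmegaO_pos (Order.add_one_le_of_lt h)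

lemma countable_Iio_of_lt_OmegaO {θ : Ordinal.{u}} (hθ : θ < OmegaO) :
    (Set.Iio θ).Countable := by
  rw [← Set.countable_coe_iff, ← Cardinal.mk_le_aleph0_iff, Cardinal.mk_Iio_ordinal,
    Cardinal.lift_le_aleph0, ← Order.lt_succ_iff, Cardinal.succ_aleph0, ← Cardinal.lt_ord]
  exact hθ

lemma sSup_lt_OmegaO {s : Set Ordinal.{u}} (hs : s.Countable) (h : ∀ x ∈ s, x < OmegaO) :
    sSup s < OmegaO := by
  refine Ordinal.sSup_lt_of_lt_cof ?_ h
  rw [OmegaO, ← Ordinal.lift_cof, Cardinal.isRegular_aleph_one.cof_ord]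
  simpa using hs.le_aleph0.trans_lt Cardinal.aleph0_lt_aleph_one

lemma OmegaO_lt_epsOmega : (OmegaO : Ordinal.{u}) < epsOmega :=
  (lt_add_one _).trans_le (Ordinal.le_nfp _ _)

lemma add_lt_epsOmega {x y : Ordinal.{u}} (hx : x < epsOmega) (hy : y < epsOmega) :
    x + y < epsOmega := by
  have h := Ordinal.isPrincipal_add_omega0_opow (epsOmega : Ordinal.{u})
  rw [epsOmega, Ordinal.nfp_fp (Ordinal.isNormal_opow Ordinal.one_lt_omega0)] at h
  exact h hx hy

lemma epsOmega_le_of_OmegaO_opow_le {a : Ordinal.{u}} (h : OmegaO ^ a ≤ a) : epsOmega ≤ a := by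
  have ha0 : a ≠ 0 := by rintro rfl; simp at h
  have hΩa : OmegaO < a := by
    refine (OmegaO_le_opow ha0).trans h |>.lt_of_ne ?_
    rintro rfl
    have h1 := (Ordinal.opow_lt_opow_iff_right one_lt_OmegaO).2 one_lt_OmegaO
    rw [Ordinal.opow_one] at h1
    exact h.not_gt h1
  exact Ordinal.nfp_le_fp (Ordinal.isNormal_opow Ordinal.one_lt_omega0).monotone
    (Order.add_one_le_of_lt hΩa) ((Ordinal.opow_le_opow_left a omega0_le_OmegaO).trans h)

lemma lt_OmegaO_opow_self {a : Ordinal.{u}} (ha : a < epsOmega) : a < OmegaO ^ a :=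
  lt_of_not_ge fun h => ha.not_ge (epsOmega_le_of_OmegaO_opow_le h)

lemma lt_of_OmegaO_opow_le {a ξ : Ordinal.{u}} (h : OmegaO ^ a ≤ ξ) (hξ : ξ < epsOmega) :
    a < ξ :=
  (lt_OmegaO_opow_self ((Ordinal.right_le_opow a one_lt_OmegaO).trans h |>.trans_lt hξ)).trans_le h

lemma log_OmegaO_lt_self {ξ : Ordinal.{u}} (h0 : ξ ≠ 0) (hε : ξ < epsOmega) :
    log OmegaO ξ < ξ :=
  lt_of_OmegaO_opow_le (Ordinal.opow_log_le_self OmegaO h0) hε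

lemma isSuccLimit_iSup_of_strictMono {f : ℕ → Ordinal.{u}} (hf : StrictMono f) :
    Order.IsSuccLimit (⨆ n, f n) := by
  have hle : ∀ n, f n ≤ ⨆ n, f n := le_ciSup Ordinal.bddAbove_of_small
  refine Ordinal.isSuccLimit_iff.2
    ⟨(zero_le.trans_lt ((hf (Nat.lt_succ_self 0)).trans_le (hle 1))).ne',
      Order.isSuccPrelimit_of_succ_lt fun x hx => ?_⟩
  obtain ⟨n, hn⟩ := (lt_ciSup_iff Ordinal.bddAbove_of_small).1 hx
  exact (Order.succ_le_of_lt hn).trans_lt ((hf (Nat.lt_succ_self n)).trans_le (hle (n + 1)))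

end OmegaArith

/-! ### The `Ω`-normal form -/

section NormalForm

variable {a b γ θ : Ordinal.{u}}

lemma log_OmegaO_opow_mul_add (hb0 : b ≠ 0) (hbΩ : b < OmegaO) (hγ : γ < OmegaO ^ a) :
    log OmegaO (OmegaO ^ a * b + γ) = a := by
  rw [Ordinal.log_opow_mul_add one_lt_OmegaO hb0 hγ, Ordinal.log_eq_zero hbΩ, add_zero]

lemma log_OmegaO_opow_mul (hb0 : b ≠ 0) (hbΩ : b < OmegaO) :
    log OmegaO (OmegaO ^ a * b) = a := by
  simpa using log_OmegaO_opow_mul_add hb0 hbΩ (Ordinal.opow_pos a OmegaO_pos)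

lemma OmegaO_opow_mul_add_div (hγ : γ < OmegaO ^ a) :
    (OmegaO ^ a * b + γ) / OmegaO ^ a = b := by
  rw [Ordinal.mul_add_div b (OmegaO_opow_ne_zero a) γ, Ordinal.div_eq_zero_of_lt hγ, add_zero]

lemma OmegaO_opow_mul_add_mod (hγ : γ < OmegaO ^ a) :
    (OmegaO ^ a * b + γ) % OmegaO ^ a = γ := by
  rw [Ordinal.mul_add_mod_self, Ordinal.mod_eq_of_lt hγ]

lemma OmegaO_opow_le_opow_mul_add (hb0 : b ≠ 0) : OmegaO ^ a ≤ OmegaO ^ a * b + γ :=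
  (Ordinal.le_mul_left _ (pos_iff_ne_zero.2 hb0)).trans le_self_add

lemma exists_eq_OmegaO_opow_mul_add {ξ : Ordinal.{u}} (h0 : ξ ≠ 0) :
    ∃ a b γ : Ordinal.{u}, b ≠ 0 ∧ b < OmegaO ∧ γ < OmegaO ^ a ∧ ξ = OmegaO ^ a * b + γ := by
  refine ⟨log OmegaO ξ, ξ / OmegaO ^ log OmegaO ξ, ξ % OmegaO ^ log OmegaO ξ, ?_, ?_,
    Ordinal.mod_lt ξ (OmegaO_opow_ne_zero _), (Ordinal.div_add_mod ξ _).symm⟩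
  · exact (Ordinal.div_pos (OmegaO_opow_ne_zero _)).2 (Ordinal.opow_log_le_self _ h0) |>.ne'
  · rw [← Ordinal.lt_mul_iff_div_lt (OmegaO_opow_ne_zero _), ← Ordinal.opow_succ]
    exact Ordinal.lt_opow_succ_log_self one_lt_OmegaO ξ

theorem induction_OmegaO_normalForm {P : Ordinal.{u} → Prop} (zero : P 0)
    (step : ∀ a b γ : Ordinal.{u}, b ≠ 0 → b < OmegaO → γ < OmegaO ^ a →
      OmegaO ^ a * b + γ < epsOmega → P a → P γ → P (OmegaO ^ a * b + γ)) :
    ∀ ξ < epsOmega, P ξ := by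
  intro ξ
  induction ξ using WellFoundedLT.induction with
  | _ ξ IH =>
    intro hε
    rcases eq_or_ne ξ 0 with rfl | h0
    · exact zero
    obtain ⟨a, b, γ, hb0, hbΩ, hγ, rfl⟩ := exists_eq_OmegaO_opow_mul_add h0
    have hle := OmegaO_opow_le_opow_mul_add (a := a) (γ := γ) hb0
    have ha := lt_of_OmegaO_opow_le hle hε
    have hγ' := hγ.trans_le hle
    exact step a b γ hb0 hbΩ hγ hε (IH a ha (ha.trans hε)) (IH γ hγ' (hγ'.trans hε))

lemma star_ordinal_zero : star (0 : Ordinal.{u}) = 0 := by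
  rw [star.eq_def]; simp

lemma star_OmegaO_opow_mul_add (hb0 : b ≠ 0) (hbΩ : b < OmegaO) (hγ : γ < OmegaO ^ a)
    (hε : OmegaO ^ a * b + γ < epsOmega) :
    star (OmegaO ^ a * b + γ) = max (max (star a) (star γ)) b := by
  have h0 : OmegaO ^ a * b + γ ≠ 0 :=
    ((Ordinal.opow_pos a OmegaO_pos).trans_le (OmegaO_opow_le_opow_mul_add hb0)).ne'
  rw [star.eq_def, dif_neg h0, dif_pos (log_OmegaO_lt_self h0 hε),
    log_OmegaO_opow_mul_add hb0 hbΩ hγ, OmegaO_opow_mul_add_mod hγ, OmegaO_opow_mul_add_div hγ]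

lemma star_OmegaO_opow_mul (hb0 : b ≠ 0) (hbΩ : b < OmegaO) (hε : OmegaO ^ a * b < epsOmega) :
    star (OmegaO ^ a * b) = max (star a) b := by
  simpa [star_ordinal_zero] using
    star_OmegaO_opow_mul_add (γ := 0) hb0 hbΩ (Ordinal.opow_pos a OmegaO_pos) (by simpa using hε)

lemma star_OmegaO_opow (hε : OmegaO ^ a < epsOmega) : star (OmegaO ^ a) = max (star a) 1 := by
  simpa using star_OmegaO_opow_mul one_ne_zero one_lt_OmegaO (by simpa using hε)

lemma star_of_lt_OmegaO (hb : b < OmegaO) : star b = b := by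
  rcases eq_or_ne b 0 with rfl | hb0
  · exact star_ordinal_zero
  simpa [star_ordinal_zero] using
    star_OmegaO_opow_mul (a := 0) hb0 hb (by simpa using hb.trans OmegaO_lt_epsOmega)

lemma star_lt_OmegaO : ∀ ξ < (epsOmega : Ordinal.{u}), star ξ < OmegaO :=
  induction_OmegaO_normalForm (by simpa [star_ordinal_zero] using OmegaO_pos)
    fun a b γ hb0 hbΩ hγ hε ha hγ' => by
      rw [star_OmegaO_opow_mul_add hb0 hbΩ hγ hε]
      exact max_lt (max_lt ha hγ') hbΩ

lemma tau_OmegaO_opow_mul_add (hb0 : b ≠ 0) (hbΩ : b < OmegaO) (hγ : γ < OmegaO ^ a)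
    (hγ0 : γ ≠ 0) : tau (OmegaO ^ a * b + γ) = tau γ := by
  rw [tau.eq_def]
  simp [log_OmegaO_opow_mul_add hb0 hbΩ hγ, OmegaO_opow_mul_add_mod hγ, hb0, hγ0]

lemma tau_OmegaO_opow_mul_of_isSuccLimit (hb : Order.IsSuccLimit b) (hbΩ : b < OmegaO) :
    tau (OmegaO ^ a * b) = b := by
  rw [tau.eq_def, log_OmegaO_opow_mul hb.ne_bot hbΩ, Ordinal.mul_mod,
    Ordinal.mul_div_cancel _ (OmegaO_opow_ne_zero a)]
  simp [OmegaO_pos.ne', show b ≠ 0 from hb.ne_bot, hb]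

lemma tau_OmegaO_opow_mul_succ (ha : Order.IsSuccLimit a) (hbΩ : b + 1 < OmegaO)
    (hε : OmegaO ^ a * (b + 1) < epsOmega) : tau (OmegaO ^ a * (b + 1)) = tau a := by
  have ha' : a < OmegaO ^ a * (b + 1) :=
    lt_of_OmegaO_opow_le (Ordinal.le_mul_left _ (by simp)) hε
  rw [tau.eq_def, log_OmegaO_opow_mul (by simp) hbΩ, Ordinal.mul_mod,
    Ordinal.mul_div_cancel _ (OmegaO_opow_ne_zero a)]
  simp [OmegaO_pos.ne', show a ≠ 0 from ha.ne_bot, ha, ha', Order.not_isSuccLimit_add_one]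

lemma tau_OmegaO_opow (ha : Order.IsSuccLimit a) (hε : OmegaO ^ a < epsOmega) :
    tau (OmegaO ^ a) = tau a := by
  simpa using tau_OmegaO_opow_mul_succ (b := 0) ha (by simpa using one_lt_OmegaO)
    (by simpa using hε)

lemma tau_OmegaO_opow_succ_mul_succ (hbΩ : b + 1 < OmegaO) :
    tau (OmegaO ^ (a + 1) * (b + 1)) = OmegaO := by
  rw [tau.eq_def, log_OmegaO_opow_mul (by simp) hbΩ, Ordinal.mul_mod,
    Ordinal.mul_div_cancel _ (OmegaO_opow_ne_zero _)]
  simp [OmegaO_pos.ne', Order.not_isSuccLimit_add_one]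

lemma tau_add_one_of_lt_OmegaO (hbΩ : b + 1 < OmegaO) : tau (b + 1) = 1 := by
  rw [tau.eq_def]
  simp [Ordinal.log_eq_zero hbΩ, Order.not_isSuccLimit_add_one]

lemma fs_OmegaO_opow_mul_add (hb0 : b ≠ 0) (hbΩ : b < OmegaO) (hγ : γ < OmegaO ^ a)
    (hγ0 : γ ≠ 0) : fs (OmegaO ^ a * b + γ) θ = OmegaO ^ a * b + fs γ θ := by
  have h1 : ¬ OmegaO ^ a * b + γ ≤ 1 := fun h =>
    hγ0 (Order.lt_one_iff.1 (hγ.trans_le ((OmegaO_opow_le_opow_mul_add hb0).trans h)))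
  rw [fs.eq_def, log_OmegaO_opow_mul_add hb0 hbΩ hγ, OmegaO_opow_mul_add_mod hγ,
    OmegaO_opow_mul_add_div hγ, dif_neg h1, dif_pos hγ0]

lemma fs_OmegaO_opow_mul_of_isSuccLimit (hb : Order.IsSuccLimit b) (hbΩ : b < OmegaO) :
    fs (OmegaO ^ a * b) θ = OmegaO ^ a * θ := by
  have h1 : ¬ OmegaO ^ a * b ≤ 1 := fun h =>
    ((Ordinal.omega0_le_of_isSuccLimit hb).trans
      ((Ordinal.le_mul_right b (Ordinal.opow_pos a OmegaO_pos)).trans h)).not_gt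
      Ordinal.one_lt_omega0
  rw [fs.eq_def, log_OmegaO_opow_mul hb.ne_bot hbΩ, Ordinal.mul_mod,
    Ordinal.mul_div_cancel _ (OmegaO_opow_ne_zero a)]
  simp [h1, hb]

lemma fs_OmegaO_opow (ha : Order.IsSuccLimit a) (hε : OmegaO ^ a < epsOmega) :
    fs (OmegaO ^ a) θ = OmegaO ^ fs a θ := by
  have h1 : ¬ OmegaO ^ a ≤ 1 := fun h =>
    ((OmegaO_le_opow ha.ne_bot).trans h).not_gt one_lt_OmegaO
  rw [fs.eq_def, Ordinal.log_opow one_lt_OmegaO, Ordinal.mod_self,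
    Ordinal.div_self (OmegaO_opow_ne_zero a)]
  simp [h1, ha, lt_of_OmegaO_opow_le le_rfl hε, show ¬ Order.IsSuccLimit (1 : Ordinal.{u}) by
    simpa using Order.not_isSuccLimit_add_one (0 : Ordinal.{u})]

lemma fs_OmegaO_opow_mul_succ (hb0 : b ≠ 0) (hbΩ : b + 1 < OmegaO) :
    fs (OmegaO ^ a * (b + 1)) θ = OmegaO ^ a * b + fs (OmegaO ^ a) θ := by
  have hb1 : b + 1 ≠ 1 := fun h => hb0 (Order.add_one_inj.1 (h.trans (zero_add 1).symm))
  have h1 : ¬ OmegaO ^ a * (b + 1) ≤ 1 := fun h =>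
    hb1 ((Ordinal.le_mul_right (b + 1) (Ordinal.opow_pos a OmegaO_pos)).trans h |>.antisymm
      (Order.one_le_iff_ne_zero.2 (by simp)))
  rw [fs.eq_def, log_OmegaO_opow_mul (by simp) hbΩ, Ordinal.mul_mod,
    Ordinal.mul_div_cancel _ (OmegaO_opow_ne_zero a)]
  simp [h1, hb1, Order.not_isSuccLimit_add_one]

end NormalForm

section MultiplesOfOmega

variable {a b γ δ c θ : Ordinal.{u}}

lemma OmegaO_dvd_opow (ha : a ≠ 0) : OmegaO ∣ OmegaO ^ a := by
  refine ⟨OmegaO ^ (a - 1), ?_⟩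
  rw [← Ordinal.opow_one_add, Ordinal.add_sub_cancel_of_le (Order.one_le_iff_ne_zero.2 ha)]

lemma ne_zero_and_OmegaO_dvd_of_dvd_opow_mul_add (hb0 : b ≠ 0) (hbΩ : b < OmegaO)
    (hγ : γ < OmegaO ^ a) (h : OmegaO ∣ OmegaO ^ a * b + γ) : a ≠ 0 ∧ OmegaO ∣ γ := by
  have ha : a ≠ 0 := by
    rintro rfl
    rw [Ordinal.opow_zero, Order.lt_one_iff] at hγ
    subst hγ
    exact (Ordinal.le_of_dvd (by simpa using hb0) h).not_gt (by simpa using hbΩ)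
  exact ⟨ha, (Ordinal.dvd_add_iff ((OmegaO_dvd_opow ha).mul_right b)).1 h⟩

lemma isSuccLimit_of_OmegaO_dvd (h : OmegaO ∣ δ) (h0 : δ ≠ 0) : Order.IsSuccLimit δ := by
  obtain ⟨t, rfl⟩ := h
  exact Ordinal.isSuccLimit_mul_left isSuccLimit_OmegaO
    (pos_iff_ne_zero.2 (by rintro rfl; simp at h0))

lemma star_add_of_OmegaO_dvd :
    ∀ δ < (epsOmega : Ordinal.{u}), OmegaO ∣ δ → ∀ c < OmegaO, star (δ + c) = max (star δ) c :=
  induction_OmegaO_normalForm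
    (fun _ c hc => by rw [zero_add, star_ordinal_zero, star_of_lt_OmegaO hc, max_eq_right zero_le])
    fun a b γ hb0 hbΩ hγ hε _ IH hdvd c hc => by
      obtain ⟨ha, hγdvd⟩ := ne_zero_and_OmegaO_dvd_of_dvd_opow_mul_add hb0 hbΩ hγ hdvd
      have hγc : γ + c < OmegaO ^ a :=
        isPrincipal_add_OmegaO_opow a hγ (hc.trans_le (OmegaO_le_opow ha))
      rw [add_assoc, star_OmegaO_opow_mul_add hb0 hbΩ hγc (by
          rw [← add_assoc]; exact add_lt_epsOmega hε (hc.trans OmegaO_lt_epsOmega)),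
        IH hγdvd c hc, star_OmegaO_opow_mul_add hb0 hbΩ hγ hε]
      simp only [max_assoc, max_comm c b]

lemma fs_add_of_OmegaO_dvd (hc0 : c ≠ 0) (hc : c < OmegaO) :
    ∀ δ < (epsOmega : Ordinal.{u}), OmegaO ∣ δ → fs (δ + c) θ = δ + fs c θ :=
  induction_OmegaO_normalForm (by simp)
    fun a b γ hb0 hbΩ hγ _ _ IH hdvd => by
      obtain ⟨ha, hγdvd⟩ := ne_zero_and_OmegaO_dvd_of_dvd_opow_mul_add hb0 hbΩ hγ hdvd
      have hγc : γ + c < OmegaO ^ a :=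
        isPrincipal_add_OmegaO_opow a hγ (hc.trans_le (OmegaO_le_opow ha))
      rw [add_assoc, fs_OmegaO_opow_mul_add hb0 hbΩ hγc (by simp [hc0]), IH hγdvd, add_assoc]

end MultiplesOfOmega

/-! ### Ordinals whose terminal part is a countable limit -/

structure TauIsCountableLimit (ξ : Ordinal.{u}) : Prop where
  ne_zero : ξ ≠ 0
  lt_epsOmega : ξ < epsOmega
  isSuccLimit_tau : Order.IsSuccLimit (tau ξ)
  tau_lt_OmegaO : tau ξ < OmegaO

namespace TauIsCountableLimit

variable {a b ξ θ : Ordinal.{u}}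

lemma of_tau_eq (hξ : TauIsCountableLimit ξ) {ζ : Ordinal.{u}} (h0 : ζ ≠ 0) (hζ : ζ ≤ ξ)
    (htau : tau ζ = tau ξ) : TauIsCountableLimit ζ :=
  ⟨h0, hζ.trans_lt hξ.lt_epsOmega, htau ▸ hξ.isSuccLimit_tau, htau ▸ hξ.tau_lt_OmegaO⟩

lemma isSuccLimit_of_opow_mul_succ (h : TauIsCountableLimit (OmegaO ^ a * (b + 1)))
    (hbΩ : b + 1 < OmegaO) : Order.IsSuccLimit a := by
  rcases Ordinal.zero_or_succ_or_isSuccLimit a with rfl | ⟨x, rfl⟩ | ha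
  · have h1 := h.isSuccLimit_tau
    rw [Ordinal.opow_zero, one_mul, tau_add_one_of_lt_OmegaO hbΩ] at h1
    exact absurd h1 (by simpa using Order.not_isSuccLimit_add_one (0 : Ordinal.{u}))
  · have hΩ := h.tau_lt_OmegaO
    rw [Order.succ_eq_add_one, tau_OmegaO_opow_succ_mul_succ hbΩ] at hΩ
    exact absurd hΩ (lt_irrefl _)
  · exact ha

/-- Only four shapes of `ξ` occur: `Ω ^ a * (b + 1)` with `a` zero or a successor has
`τ = 1` or `τ = Ω`. -/
@[elab_as_elim]
theorem induction {P : Ordinal.{u} → Prop}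
    (add : ∀ a b γ : Ordinal.{u}, b ≠ 0 → b < OmegaO → γ ≠ 0 → γ < OmegaO ^ a →
      OmegaO ^ a * b + γ < epsOmega → TauIsCountableLimit γ → P γ → P (OmegaO ^ a * b + γ))
    (mul : ∀ a b : Ordinal.{u}, Order.IsSuccLimit b → b < OmegaO →
      OmegaO ^ a * b < epsOmega → P (OmegaO ^ a * b))
    (mul_succ : ∀ a b : Ordinal.{u}, Order.IsSuccLimit a → b ≠ 0 → b + 1 < OmegaO →
      OmegaO ^ a * (b + 1) < epsOmega → TauIsCountableLimit (OmegaO ^ a) → P (OmegaO ^ a) →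
      P (OmegaO ^ a * (b + 1)))
    (opow : ∀ a : Ordinal.{u}, Order.IsSuccLimit a → OmegaO ^ a < epsOmega →
      TauIsCountableLimit a → P a → P (OmegaO ^ a))
    (hξ : TauIsCountableLimit ξ) : P ξ := by
  induction ξ using WellFoundedLT.induction with
  | _ ξ IH =>
    obtain ⟨a, b, γ, hb0, hbΩ, hγ, rfl⟩ := exists_eq_OmegaO_opow_mul_add hξ.ne_zero
    have hε := hξ.lt_epsOmega
    have hle : OmegaO ^ a ≤ OmegaO ^ a * b + γ := OmegaO_opow_le_opow_mul_add hb0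
    obtain hγ0 | rfl := ne_or_eq γ 0
    · have hγH := hξ.of_tau_eq hγ0 le_add_self (tau_OmegaO_opow_mul_add hb0 hbΩ hγ hγ0).symm
      exact add a b γ hb0 hbΩ hγ0 hγ hε hγH (IH γ (hγ.trans_le hle) hγH)
    rw [add_zero] at hξ hε hle IH ⊢
    rcases Ordinal.zero_or_succ_or_isSuccLimit b with rfl | ⟨b, rfl⟩ | hb
    · exact absurd rfl hb0
    · rw [Order.succ_eq_add_one] at hξ hε hle hbΩ IH ⊢
      have ha := hξ.isSuccLimit_of_opow_mul_succ hbΩ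
      have hτ := tau_OmegaO_opow_mul_succ ha hbΩ hε
      obtain rfl | hb0 := eq_or_ne b 0
      · rw [zero_add, mul_one] at hξ hε hτ IH ⊢
        have haH := hξ.of_tau_eq ha.ne_bot (Ordinal.right_le_opow a one_lt_OmegaO) hτ.symm
        exact opow a ha hε haH (IH a (lt_of_OmegaO_opow_le le_rfl hε) haH)
      · have hΩaH := hξ.of_tau_eq (OmegaO_opow_ne_zero a) hle
          ((tau_OmegaO_opow ha (hle.trans_lt hε)).trans hτ.symm)
        have hlt : OmegaO ^ a < OmegaO ^ a * (b + 1) :=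
          lt_mul_of_one_lt_right (Ordinal.opow_pos a OmegaO_pos)
            (Order.lt_add_one_iff.2 (Order.one_le_iff_ne_zero.2 hb0))
        exact mul_succ a b ha hb0 hbΩ hε hΩaH (IH _ hlt hΩaH)
    · exact mul a b hb hbΩ hε

theorem fs_tau (hξ : TauIsCountableLimit ξ) : fs ξ (tau ξ) = ξ := by
  refine TauIsCountableLimit.induction ?add ?mul ?mul_succ ?opow hξ
  case add =>
    intro a b γ hb0 hbΩ hγ0 hγ _ _ IH
    rw [tau_OmegaO_opow_mul_add hb0 hbΩ hγ hγ0, fs_OmegaO_opow_mul_add hb0 hbΩ hγ hγ0, IH]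
  case mul =>
    intro a b hb hbΩ _
    rw [tau_OmegaO_opow_mul_of_isSuccLimit hb hbΩ, fs_OmegaO_opow_mul_of_isSuccLimit hb hbΩ]
  case mul_succ =>
    intro a b ha hb0 hbΩ hε hH IH
    rw [tau_OmegaO_opow_mul_succ ha hbΩ hε, fs_OmegaO_opow_mul_succ hb0 hbΩ,
      ← tau_OmegaO_opow ha hH.lt_epsOmega, IH, mul_add_one]
  case opow =>
    intro a ha hε _ IH
    rw [tau_OmegaO_opow ha hε, fs_OmegaO_opow ha hε, IH]

theorem strictMonoOn_fs (hξ : TauIsCountableLimit ξ) :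
    StrictMonoOn (fs ξ) (Set.Iic (tau ξ)) := by
  refine TauIsCountableLimit.induction ?add ?mul ?mul_succ ?opow hξ
  case add =>
    intro a b γ hb0 hbΩ hγ0 hγ _ _ IH
    rw [tau_OmegaO_opow_mul_add hb0 hbΩ hγ hγ0]
    intro θ hθ θ' hθ' h
    simp only [fs_OmegaO_opow_mul_add hb0 hbΩ hγ hγ0]
    exact (add_lt_add_iff_left _).2 (IH hθ hθ' h)
  case mul =>
    intro a b hb hbΩ _ θ _ θ' _ h
    simp only [fs_OmegaO_opow_mul_of_isSuccLimit hb hbΩ]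
    exact mul_lt_mul_of_pos_left h (Ordinal.opow_pos a OmegaO_pos)
  case mul_succ =>
    intro a b ha hb0 hbΩ hε hH IH
    rw [tau_OmegaO_opow_mul_succ ha hbΩ hε, ← tau_OmegaO_opow ha hH.lt_epsOmega]
    intro θ hθ θ' hθ' h
    simp only [fs_OmegaO_opow_mul_succ hb0 hbΩ]
    exact (add_lt_add_iff_left _).2 (IH hθ hθ' h)
  case opow =>
    intro a ha hε _ IH
    rw [tau_OmegaO_opow ha hε]
    intro θ hθ θ' hθ' h
    simp only [fs_OmegaO_opow ha hε]
    exact (Ordinal.opow_lt_opow_iff_right one_lt_OmegaO).2 (IH hθ hθ' h)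

theorem fs_le (hξ : TauIsCountableLimit ξ) (hθ : θ ≤ tau ξ) : fs ξ θ ≤ ξ := by
  simpa only [hξ.fs_tau] using hξ.strictMonoOn_fs.monotoneOn hθ (Set.mem_Iic.2 le_rfl) hθ

theorem exists_lt_fs (hξ : TauIsCountableLimit ξ) : ∀ ζ < ξ, ∃ θ < tau ξ, ζ < fs ξ θ := by
  refine TauIsCountableLimit.induction ?add ?mul ?mul_succ ?opow hξ
  case add =>
    intro a b γ hb0 hbΩ hγ0 hγ _ _ IH ζ hζ
    obtain ⟨θ, hθ, hζθ⟩ := IH _ (Ordinal.sub_lt_of_lt_add hζ (pos_iff_ne_zero.2 hγ0))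
    refine ⟨θ, by rwa [tau_OmegaO_opow_mul_add hb0 hbΩ hγ hγ0], ?_⟩
    rw [fs_OmegaO_opow_mul_add hb0 hbΩ hγ hγ0]
    exact (Ordinal.le_add_sub ζ _).trans_lt ((add_lt_add_iff_left _).2 hζθ)
  case mul =>
    intro a b hb hbΩ _ ζ hζ
    have hdiv : ζ / OmegaO ^ a < b := (Ordinal.lt_mul_iff_div_lt (OmegaO_opow_ne_zero a)).1 hζ
    refine ⟨Order.succ (ζ / OmegaO ^ a), ?_, ?_⟩
    · rw [tau_OmegaO_opow_mul_of_isSuccLimit hb hbΩ]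
      exact hb.succ_lt hdiv
    · rw [fs_OmegaO_opow_mul_of_isSuccLimit hb hbΩ]
      exact Ordinal.lt_mul_succ_div ζ (OmegaO_opow_ne_zero a)
  case mul_succ =>
    intro a b ha hb0 hbΩ hε hH IH ζ hζ
    rw [mul_add_one] at hζ
    obtain ⟨θ, hθ, hζθ⟩ := IH _ (Ordinal.sub_lt_of_lt_add hζ (Ordinal.opow_pos a OmegaO_pos))
    refine ⟨θ, ?_, ?_⟩
    · rwa [tau_OmegaO_opow_mul_succ ha hbΩ hε, ← tau_OmegaO_opow ha hH.lt_epsOmega]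
    · rw [fs_OmegaO_opow_mul_succ hb0 hbΩ]
      exact (Ordinal.le_add_sub ζ _).trans_lt ((add_lt_add_iff_left _).2 hζθ)
  case opow =>
    intro a ha hε hH IH ζ hζ
    rw [tau_OmegaO_opow ha hε]
    rcases eq_or_ne ζ 0 with rfl | hζ0
    · refine ⟨0, pos_iff_ne_zero.2 hH.isSuccLimit_tau.ne_bot, ?_⟩
      rw [fs_OmegaO_opow ha hε]
      exact Ordinal.opow_pos _ OmegaO_pos
    obtain ⟨θ, hθ, hlog⟩ := IH _ ((Ordinal.lt_opow_iff_log_lt one_lt_OmegaO hζ0).1 hζ)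
    refine ⟨θ, hθ, ?_⟩
    rw [fs_OmegaO_opow ha hε]
    exact (Ordinal.lt_opow_succ_log_self one_lt_OmegaO ζ).trans_le
      (Ordinal.opow_le_opow_right OmegaO_pos (Order.succ_le_of_lt hlog))

theorem exists_lt_fs_of_iSup_eq (hξ : TauIsCountableLimit ξ) {τs : ℕ → Ordinal.{u}}
    (hsup : ⨆ n, τs n = tau ξ) : ∀ ζ < ξ, ∃ n, ζ < fs ξ (τs n) := by
  intro ζ hζ
  obtain ⟨θ, hθ, hζθ⟩ := hξ.exists_lt_fs ζ hζ
  obtain ⟨n, hn⟩ := (lt_ciSup_iff Ordinal.bddAbove_of_small).1 (hsup ▸ hθ)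
  have hτn : τs n ≤ tau ξ := hsup ▸ le_ciSup Ordinal.bddAbove_of_small n
  exact ⟨n, hζθ.trans (hξ.strictMonoOn_fs hθ.le hτn hn)⟩

theorem tau_le_star (hξ : TauIsCountableLimit ξ) : tau ξ ≤ star ξ := by
  refine TauIsCountableLimit.induction ?add ?mul ?mul_succ ?opow hξ
  case add =>
    intro a b γ hb0 hbΩ hγ0 hγ hε _ IH
    rw [tau_OmegaO_opow_mul_add hb0 hbΩ hγ hγ0, star_OmegaO_opow_mul_add hb0 hbΩ hγ hε]
    exact IH.trans (le_max_of_le_left (le_max_right _ _))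
  case mul =>
    intro a b hb hbΩ hε
    rw [tau_OmegaO_opow_mul_of_isSuccLimit hb hbΩ, star_OmegaO_opow_mul hb.ne_bot hbΩ hε]
    exact le_max_right _ _
  case mul_succ =>
    intro a b ha _ hbΩ hε hH IH
    rw [tau_OmegaO_opow_mul_succ ha hbΩ hε, star_OmegaO_opow_mul (by simp) hbΩ hε,
      ← tau_OmegaO_opow ha hH.lt_epsOmega]
    refine IH.trans ?_
    rw [star_OmegaO_opow hH.lt_epsOmega]
    exact max_le_max le_rfl (Order.one_le_iff_ne_zero.2 (by simp))
  case opow =>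
    intro a ha hε _ IH
    rw [tau_OmegaO_opow ha hε, star_OmegaO_opow hε]
    exact IH.trans (le_max_left _ _)

theorem star_fs_le (hξ : TauIsCountableLimit ξ) :
    ∀ θ ≤ tau ξ, star (fs ξ θ) ≤ max (star ξ) θ := by
  refine TauIsCountableLimit.induction ?add ?mul ?mul_succ ?opow hξ
  case add =>
    intro a b γ hb0 hbΩ hγ0 hγ hε hH IH θ hθ
    rw [tau_OmegaO_opow_mul_add hb0 hbΩ hγ hγ0] at hθ
    have hfs := hH.fs_le hθ
    have := IH θ hθ
    rw [fs_OmegaO_opow_mul_add hb0 hbΩ hγ hγ0, star_OmegaO_opow_mul_add hb0 hbΩ (hfs.trans_lt hγ)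
      (((add_le_add_iff_left _).2 hfs).trans_lt hε), star_OmegaO_opow_mul_add hb0 hbΩ hγ hε]
    order
  case mul =>
    intro a b hb hbΩ hε θ hθ
    rw [tau_OmegaO_opow_mul_of_isSuccLimit hb hbΩ] at hθ
    rw [fs_OmegaO_opow_mul_of_isSuccLimit hb hbΩ, star_OmegaO_opow_mul hb.ne_bot hbΩ hε]
    rcases eq_or_ne θ 0 with rfl | hθ0
    · simp [star_ordinal_zero]
    have hle : OmegaO ^ a * θ ≤ OmegaO ^ a * b := by gcongr
    rw [star_OmegaO_opow_mul hθ0 (hθ.trans_lt hbΩ) (hle.trans_lt hε)]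
    order
  case mul_succ =>
    intro a b ha hb0 hbΩ hε hH IH θ hθ
    rw [tau_OmegaO_opow_mul_succ ha hbΩ hε, ← tau_OmegaO_opow ha hH.lt_epsOmega] at hθ
    rw [fs_OmegaO_opow_mul_succ hb0 hbΩ]
    rcases (hH.fs_le hθ).eq_or_lt with heq | hlt
    · rw [heq, ← mul_add_one]
      exact le_max_left _ _
    have hε' : OmegaO ^ a * b + fs (OmegaO ^ a) θ < epsOmega :=
      ((add_le_add_iff_left _).2 hlt.le).trans_lt (by rwa [← mul_add_one])
    have hb : 1 ≤ b ∧ b ≤ b + 1 := ⟨Order.one_le_iff_ne_zero.2 hb0, le_self_add⟩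
    have := IH θ hθ
    rw [star_OmegaO_opow hH.lt_epsOmega] at this
    rw [star_OmegaO_opow_mul_add hb0 ((lt_add_one b).trans hbΩ) hlt hε',
      star_OmegaO_opow_mul (by simp) hbΩ hε]
    order
  case opow =>
    intro a ha hε hH IH θ hθ
    rw [tau_OmegaO_opow ha hε] at hθ
    have hε' : OmegaO ^ fs a θ < epsOmega :=
      (Ordinal.opow_le_opow_right OmegaO_pos (hH.fs_le hθ)).trans_lt hε
    have := IH θ hθ
    rw [fs_OmegaO_opow ha hε, star_OmegaO_opow hε', star_OmegaO_opow hε]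
    order

/-- The summand `1` occurs, e.g. `(Ω ^ ω)[0] = Ω ^ 0 = 1`. -/
theorem exists_OmegaO_dvd_fs_eq (hξ : TauIsCountableLimit ξ) :
    OmegaO ∣ ξ → ∀ θ, ∃ δ, OmegaO ∣ δ ∧ (fs ξ θ = δ ∨ fs ξ θ = δ + 1) := by
  refine TauIsCountableLimit.induction ?add ?mul ?mul_succ ?opow hξ
  case add =>
    intro a b γ hb0 hbΩ hγ0 hγ _ _ IH hdvd θ
    obtain ⟨ha, hγdvd⟩ := ne_zero_and_OmegaO_dvd_of_dvd_opow_mul_add hb0 hbΩ hγ hdvd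
    obtain ⟨δ, hδ, hfs⟩ := IH hγdvd θ
    refine ⟨OmegaO ^ a * b + δ, dvd_add ((OmegaO_dvd_opow ha).mul_right b) hδ, ?_⟩
    rw [fs_OmegaO_opow_mul_add hb0 hbΩ hγ hγ0, add_assoc]
    rcases hfs with h | h <;> simp [h]
  case mul =>
    intro a b hb hbΩ _ hdvd θ
    have ha := (ne_zero_and_OmegaO_dvd_of_dvd_opow_mul_add hb.ne_bot hbΩ
      (Ordinal.opow_pos a OmegaO_pos) (by rwa [add_zero])).1
    exact ⟨_, (OmegaO_dvd_opow ha).mul_right θ,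
      Or.inl (fs_OmegaO_opow_mul_of_isSuccLimit hb hbΩ)⟩
  case mul_succ =>
    intro a b ha hb0 hbΩ _ _ IH _ θ
    have hdvd := OmegaO_dvd_opow ha.ne_bot
    obtain ⟨δ, hδ, hfs⟩ := IH hdvd θ
    refine ⟨OmegaO ^ a * b + δ, dvd_add (hdvd.mul_right b) hδ, ?_⟩
    rw [fs_OmegaO_opow_mul_succ hb0 hbΩ, add_assoc]
    rcases hfs with h | h <;> simp [h]
  case opow =>
    intro a ha hε _ _ _ θ
    rw [fs_OmegaO_opow ha hε]
    rcases eq_or_ne (fs a θ) 0 with h | h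
    · exact ⟨0, dvd_zero _, Or.inr (by simp [h])⟩
    · exact ⟨_, OmegaO_dvd_opow h, Or.inl rfl⟩

theorem fs_add_OmegaO_le (hξ : TauIsCountableLimit ξ) :
    OmegaO ∣ ξ → ∀ θ θ', θ < θ' → θ' ≤ tau ξ → fs ξ θ + OmegaO ≤ fs ξ θ' := by
  refine TauIsCountableLimit.induction ?add ?mul ?mul_succ ?opow hξ
  case add =>
    intro a b γ hb0 hbΩ hγ0 hγ _ _ IH hdvd θ θ' h hθ'
    rw [tau_OmegaO_opow_mul_add hb0 hbΩ hγ hγ0] at hθ'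
    simp only [fs_OmegaO_opow_mul_add hb0 hbΩ hγ hγ0, add_assoc]
    exact (add_le_add_iff_left _).2
      (IH (ne_zero_and_OmegaO_dvd_of_dvd_opow_mul_add hb0 hbΩ hγ hdvd).2 θ θ' h hθ')
  case mul =>
    intro a b hb hbΩ _ hdvd θ θ' h _
    have ha := (ne_zero_and_OmegaO_dvd_of_dvd_opow_mul_add hb.ne_bot hbΩ
      (Ordinal.opow_pos a OmegaO_pos) (by rwa [add_zero])).1
    simp only [fs_OmegaO_opow_mul_of_isSuccLimit hb hbΩ]
    calc OmegaO ^ a * θ + OmegaO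
        ≤ OmegaO ^ a * θ + OmegaO ^ a := by gcongr; exact OmegaO_le_opow ha
      _ = OmegaO ^ a * (θ + 1) := (mul_add_one _ _).symm
      _ ≤ OmegaO ^ a * θ' := by gcongr; exact Order.add_one_le_of_lt h
  case mul_succ =>
    intro a b ha hb0 hbΩ hε hH IH _ θ θ' h hθ'
    rw [tau_OmegaO_opow_mul_succ ha hbΩ hε, ← tau_OmegaO_opow ha hH.lt_epsOmega] at hθ'
    simp only [fs_OmegaO_opow_mul_succ hb0 hbΩ, add_assoc]
    exact (add_le_add_iff_left _).2 (IH (OmegaO_dvd_opow ha.ne_bot) θ θ' h hθ')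
  case opow =>
    intro a ha hε hH _ _ θ θ' h hθ'
    rw [tau_OmegaO_opow ha hε] at hθ'
    simp only [fs_OmegaO_opow ha hε]
    exact OmegaO_opow_add_OmegaO_le (hH.strictMonoOn_fs (h.le.trans hθ') hθ' h)

theorem fs_add_lt_fs (hξ : TauIsCountableLimit ξ) (hdvd : OmegaO ∣ ξ) {T θ' : Ordinal.{u}}
    (hT : T < OmegaO) (h : θ < θ') (hθ' : θ' ≤ tau ξ) : fs ξ θ + T < fs ξ θ' :=
  ((add_lt_add_iff_left _).2 hT).trans_le (hξ.fs_add_OmegaO_le hdvd θ θ' h hθ')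

theorem star_fs_add_eq (hξ : TauIsCountableLimit ξ) (hdvd : OmegaO ∣ ξ) {T : Ordinal.{u}}
    (hθ : θ ≤ tau ξ) (hωT : ω ≤ T) (hT : T < OmegaO) (hξT : star ξ ≤ T) (hθT : θ ≤ T) :
    star (fs ξ θ + T) = T := by
  obtain ⟨δ, hδ, hfs⟩ := hξ.exists_OmegaO_dvd_fs_eq hdvd θ
  have hδε : δ < epsOmega := by
    refine (le_trans ?_ (hξ.fs_le hθ)).trans_lt hξ.lt_epsOmega
    rcases hfs with h | h <;> simp [h]
  have hδstar : star δ ≤ star (fs ξ θ) := by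
    rcases hfs with h | h
    · rw [h]
    · rw [h, star_add_of_OmegaO_dvd δ hδε hδ 1 one_lt_OmegaO]
      exact le_max_left _ _
  have hadd : fs ξ θ + T = δ + T := by
    rcases hfs with h | h
    · rw [h]
    · rw [h, add_assoc, Ordinal.one_add_of_omega0_le hωT]
  have := hξ.star_fs_le θ hθ
  rw [hadd, star_add_of_OmegaO_dvd δ hδε hδ T hT]
  order

end TauIsCountableLimit

/-! ### The collapsing function -/

section Collapse

variable {X : Set Ordinal.{u}} {ξ ζ θ T : Ordinal.{u}}

def normalFormsBelow (θ : Ordinal.{u}) : ℕ → Set Ordinal.{u}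
  | 0 => {0}
  | n + 1 => normalFormsBelow θ n ∪ (fun p : Ordinal.{u} × Ordinal.{u} × Ordinal.{u} =>
      OmegaO ^ p.1 * p.2.1 + p.2.2) '' (normalFormsBelow θ n ×ˢ Set.Iio θ ×ˢ normalFormsBelow θ n)

lemma countable_normalFormsBelow (hθ : θ < OmegaO) (n : ℕ) :
    (normalFormsBelow θ n).Countable := by
  induction n with
  | zero => exact Set.countable_singleton 0
  | succ n IH => exact IH.union ((IH.prod ((countable_Iio_of_lt_OmegaO hθ).prod IH)).image _)

lemma monotone_normalFormsBelow : Monotone (normalFormsBelow θ) :=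
  monotone_nat_of_le_succ fun _ => Set.subset_union_left

lemma countable_setOf_star_lt (hθ : θ < OmegaO) :
    {ζ : Ordinal.{u} | ζ < epsOmega ∧ star ζ < θ}.Countable := by
  refine (Set.countable_iUnion (countable_normalFormsBelow hθ)).mono ?_
  rintro ζ ⟨hε, hζ⟩
  revert hζ
  refine induction_OmegaO_normalForm (P := fun ζ => star ζ < θ → ζ ∈ ⋃ n, normalFormsBelow θ n)
    (fun _ => Set.mem_iUnion.2 ⟨0, rfl⟩) ?_ ζ hε
  intro a b γ hb0 hbΩ hγ hε ha hγ' hstar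
  rw [star_OmegaO_opow_mul_add hb0 hbΩ hγ hε, max_lt_iff, max_lt_iff] at hstar
  obtain ⟨m, hm⟩ := Set.mem_iUnion.1 (ha hstar.1.1)
  obtain ⟨k, hk⟩ := Set.mem_iUnion.1 (hγ' hstar.1.2)
  exact Set.mem_iUnion.2 ⟨max m k + 1, Or.inr ⟨(a, b, γ),
    ⟨monotone_normalFormsBelow (le_max_left m k) hm, hstar.2,
      monotone_normalFormsBelow (le_max_right m k) hk⟩, rfl⟩⟩

lemma IsClubBelowOmega.exists_mem_closure_point (hX : IsClubBelowOmega X)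
    {f : Ordinal.{u} → Ordinal.{u}} (hf : Monotone f) (hfΩ : ∀ θ < OmegaO, f θ < OmegaO)
    {x : Ordinal.{u}} (hx : x < OmegaO) : ∃ σ ∈ X, x < σ ∧ ∀ θ < σ, f θ < σ := by
  have step : ∀ y : Set.Iio (OmegaO : Ordinal.{u}),
      ∃ z : Set.Iio (OmegaO : Ordinal.{u}), z.1 ∈ X ∧ max y.1 (f y.1) < z.1 := by
    rintro ⟨y, hy⟩
    obtain ⟨z, hzX, hz⟩ := hX.2.1 _ (max_lt hy (hfΩ y hy))
    exact ⟨⟨z, hX.1 z hzX⟩, hzX, hz⟩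
  choose g hgX hg using step
  let s : ℕ → Set.Iio (OmegaO : Ordinal.{u}) := fun n => g (g^[n] ⟨x, hx⟩)
  have hs_succ : ∀ n, s (n + 1) = g (s n) := fun n =>
    congrArg g (Function.iterate_succ_apply' g n _)
  have hbdd : BddAbove (Set.range fun n => (s n).1) :=
    ⟨OmegaO, by rintro _ ⟨n, rfl⟩; exact (s n).2.le⟩
  have hle : ∀ n, (s n).1 ≤ ⨆ n, (s n).1 := le_ciSup hbdd
  refine ⟨⨆ n, (s n).1, hX.2.2 _ (by rintro _ ⟨n, rfl⟩; exact hgX _) (Set.range_nonempty _)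
    (sSup_lt_OmegaO (Set.countable_range _) (by rintro _ ⟨n, rfl⟩; exact (s n).2)), ?_, ?_⟩
  · exact (le_max_left _ _).trans_lt (hg ⟨x, hx⟩) |>.trans_le (hle 0)
  · intro θ hθ
    obtain ⟨n, hn⟩ := (lt_ciSup_iff hbdd).1 hθ
    calc f θ ≤ f (s n).1 := hf hn.le
      _ < (s (n + 1)).1 := hs_succ n ▸ (le_max_right _ _).trans_lt (hg (s n))
      _ ≤ ⨆ n, (s n).1 := hle (n + 1)

def ThetaCandidates (X : Set Ordinal.{u}) (ξ : Ordinal.{u}) : Set Ordinal.{u} :=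
  {θ | θ ∈ X ∧ star ξ < θ ∧ ∀ ζ, ζ < ξ → star ζ < θ → ThetaF X ζ < θ}

lemma ThetaF_eq_sInf : ThetaF X ξ = sInf (ThetaCandidates X ξ) := by
  rw [ThetaF]; rfl

lemma ThetaF_lt_OmegaO (hX : IsClubBelowOmega X) (ξ : Ordinal.{u}) : ThetaF X ξ < OmegaO := by
  rw [ThetaF_eq_sInf]
  rcases (ThetaCandidates X ξ).eq_empty_or_nonempty with he | hne
  · simpa [he] using OmegaO_pos
  · exact hX.1 _ (csInf_mem hne).1

lemma nonempty_ThetaCandidates (hX : IsClubBelowOmega X) (hξ : ξ < epsOmega) :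
    (ThetaCandidates X ξ).Nonempty := by
  let B : Ordinal.{u} → Set Ordinal.{u} := fun θ =>
    (fun ζ => ThetaF X ζ + 1) '' {ζ | ζ < ξ ∧ star ζ ≤ θ}
  have hBΩ : ∀ θ, ∀ x ∈ B θ, x < OmegaO := by
    rintro θ _ ⟨ζ, -, rfl⟩
    exact add_lt_OmegaO (ThetaF_lt_OmegaO hX ζ) one_lt_OmegaO
  have hbdd : ∀ θ, BddAbove (B θ) := fun θ => ⟨OmegaO, fun x hx => (hBΩ θ x hx).le⟩
  have hmono : Monotone fun θ => sSup (B θ) := fun θ θ' h =>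
    csSup_le_csSup' (hbdd θ') (Set.image_mono fun ζ hζ => ⟨hζ.1, hζ.2.trans h⟩)
  have hcount : ∀ θ < OmegaO, (B θ).Countable := fun θ hθ =>
    ((countable_setOf_star_lt (add_lt_OmegaO hθ one_lt_OmegaO)).mono
      fun ζ (hζ : ζ < ξ ∧ star ζ ≤ θ) => show ζ < epsOmega ∧ star ζ < θ + 1 from
        ⟨hζ.1.trans hξ, Order.lt_add_one_iff.2 hζ.2⟩).image _
  obtain ⟨σ, hσX, hσ, hσB⟩ := hX.exists_mem_closure_point hmono
    (fun θ hθ => sSup_lt_OmegaO (hcount θ hθ) (hBΩ θ)) (star_lt_OmegaO ξ hξ)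
  refine ⟨σ, hσX, hσ, fun ζ hζ hζσ => ?_⟩
  calc ThetaF X ζ < ThetaF X ζ + 1 := lt_add_one _
    _ ≤ sSup (B (star ζ)) := le_csSup (hbdd _) ⟨ζ, ⟨hζ, le_rfl⟩, rfl⟩
    _ < σ := hσB _ hζσ

lemma ThetaF_mem_ThetaCandidates (hX : IsClubBelowOmega X) (hξ : ξ < epsOmega) :
    ThetaF X ξ ∈ ThetaCandidates X ξ := by
  rw [ThetaF_eq_sInf]
  exact csInf_mem (nonempty_ThetaCandidates hX hξ)

lemma ThetaF_le_of_mem (h : θ ∈ ThetaCandidates X ξ) : ThetaF X ξ ≤ θ := by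
  rw [ThetaF_eq_sInf]
  exact csInf_le (OrderBot.bddBelow _) h

lemma ThetaF_mem (hX : IsClubBelowOmega X) (hξ : ξ < epsOmega) : ThetaF X ξ ∈ X :=
  (ThetaF_mem_ThetaCandidates hX hξ).1

lemma star_lt_ThetaF (hX : IsClubBelowOmega X) (hξ : ξ < epsOmega) : star ξ < ThetaF X ξ :=
  (ThetaF_mem_ThetaCandidates hX hξ).2.1

lemma ThetaF_lt_ThetaF (hX : IsClubBelowOmega X) (hξ : ξ < epsOmega) (hζξ : ζ < ξ)
    (hζ : star ζ < ThetaF X ξ) : ThetaF X ζ < ThetaF X ξ :=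
  (ThetaF_mem_ThetaCandidates hX hξ).2.2 ζ hζξ hζ

theorem strictMono_ThetaF_and_iSup_eq (hX : IsClubBelowOmega X) (hξ : ξ < epsOmega)
    {s : ℕ → Ordinal.{u}} (hs : StrictMono s) (hsξ : ∀ n, s n < ξ)
    (hstar : ∀ n, star (s n) = T) (hξT : star ξ ≤ T) (hTξ : T < ThetaF X ξ)
    (hcof : ∀ ζ < ξ, (∃ n, ζ < s n) ∨ ThetaF X ζ ≤ T) :
    StrictMono (fun n => ThetaF X (s n)) ∧ ⨆ n, ThetaF X (s n) = ThetaF X ξ := by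
  have hsε : ∀ n, s n < epsOmega := fun n => (hsξ n).trans hξ
  have hT : ∀ n, T < ThetaF X (s n) := fun n => hstar n ▸ star_lt_ThetaF hX (hsε n)
  have hmono : StrictMono (fun n => ThetaF X (s n)) := fun m n h =>
    ThetaF_lt_ThetaF hX (hsε n) (hs h) ((hstar m).trans_lt (hT n))
  have hle : ∀ n, ThetaF X (s n) ≤ ⨆ n, ThetaF X (s n) := le_ciSup Ordinal.bddAbove_of_small
  refine ⟨hmono, le_antisymm (ciSup_le fun n =>
    (ThetaF_lt_ThetaF hX hξ (hsξ n) ((hstar n).trans_lt hTξ)).le) (ThetaF_le_of_mem ⟨?_, ?_, ?_⟩)⟩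
  · exact hX.2.2 _ (by rintro _ ⟨n, rfl⟩; exact ThetaF_mem hX (hsε n)) (Set.range_nonempty _)
      (sSup_lt_OmegaO (Set.countable_range _) (by rintro _ ⟨n, rfl⟩; exact ThetaF_lt_OmegaO hX _))
  · exact hξT.trans_lt ((hT 0).trans_le (hle 0))
  · intro ζ hζ hζσ
    obtain ⟨m, hm⟩ := (lt_ciSup_iff Ordinal.bddAbove_of_small).1 hζσ
    rcases hcof ζ hζ with ⟨n, hn⟩ | hζT
    · exact (ThetaF_lt_ThetaF hX (hsε (max m n)) (hn.trans_le (hs.monotone (le_max_right m n)))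
        (hm.trans_le (hmono.monotone (le_max_left m n)))).trans_le (hle _)
    · exact hζT.trans_lt ((hT 0).trans_le (hle 0))

end Collapse

/-! ### The value `Θ*(α + β)` -/

section ThetaStar

variable {X : Set Ordinal.{u}} {ξ α β : Ordinal.{u}}

lemma ThetaStarF_add_one (ζ : Ordinal.{u}) : ThetaStarF X (ζ + 1) = ThetaF X ζ := by
  simp [ThetaStarF]

lemma ThetaStarF_of_mem_FIXs (h : ξ ∈ FIXs X) (hs : ¬ ∃ ζ, ξ = ζ + 1) :
    ThetaStarF X ξ = tau ξ := by
  simp [ThetaStarF, hs, h]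

lemma ThetaStarF_spec_of_succ (hX : IsClubBelowOmega X) (hα : OmegaO ∣ α)
    (hβ : β + 1 < OmegaO) (hε : α + (β + 1) < epsOmega) :
    star (α + (β + 1)) ≤ ThetaStarF X (α + (β + 1)) ∧
      ThetaStarF X (α + (β + 1)) < ThetaF X (α + (β + 1)) ∧
      ∀ ζ < β + 1, ThetaF X (α + ζ) ≤ ThetaStarF X (α + (β + 1)) := by
  have hβ' : β < OmegaO := (lt_add_one β).trans hβ
  have hαβε : α + β < epsOmega := ((add_le_add_iff_left α).2 le_self_add).trans_lt hε
  have hstar : ∀ ζ < OmegaO, star (α + ζ) = max (star α) ζ :=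
    star_add_of_OmegaO_dvd α (le_self_add.trans_lt hε) hα
  have hlt := star_lt_ThetaF hX hαβε
  rw [hstar β hβ', max_lt_iff] at hlt
  have hlt' := star_lt_ThetaF hX hε
  rw [hstar _ hβ] at hlt'
  rw [← add_assoc, ThetaStarF_add_one, add_assoc]
  refine ⟨?_, ThetaF_lt_ThetaF hX hε ((add_lt_add_iff_left α).2 (lt_add_one β)) ?_, ?_⟩
  · rw [hstar _ hβ]
    exact max_le hlt.1.le (Order.add_one_le_of_lt hlt.2)
  · rw [hstar β hβ']
    exact (max_le_max le_rfl le_self_add).trans_lt hlt'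
  · intro ζ hζ
    rcases (Order.lt_add_one_iff.1 hζ).eq_or_lt with rfl | hζβ
    · exact le_rfl
    refine (ThetaF_lt_ThetaF hX hαβε ((add_lt_add_iff_left α).2 hζβ) ?_).le
    rw [hstar ζ (hζβ.trans hβ')]
    exact max_lt hlt.1 (hζβ.trans hlt.2)

lemma ThetaStarF_spec_of_mem_FIXs (hX : IsClubBelowOmega X) (hα : OmegaO ∣ α)
    (hβ : β < OmegaO) (hfix : α + β ∈ FIXs X) (hs : ¬ ∃ ζ, α + β = ζ + 1) :
    star (α + β) ≤ ThetaStarF X (α + β) ∧ ThetaStarF X (α + β) < ThetaF X (α + β) ∧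
      ∀ ζ < β, ThetaF X (α + ζ) ≤ ThetaStarF X (α + β) := by
  rw [ThetaStarF_of_mem_FIXs hfix hs]
  obtain ⟨hε, hfs, hτ, γ, hγ, hγε, hΘγ⟩ := hfix
  rw [← hτ]
  refine ⟨le_rfl, star_lt_ThetaF hX hε, fun ζ hζ => ?_⟩
  have hαε : α < epsOmega := le_self_add.trans_lt hε
  have hstar : ∀ ζ < OmegaO, star (α + ζ) = max (star α) ζ := star_add_of_OmegaO_dvd α hαε hα
  have hβlim : Order.IsSuccLimit β := by
    rcases Ordinal.zero_or_succ_or_isSuccLimit β with rfl | ⟨b, rfl⟩ | hβlim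
    · exact absurd hζ not_lt_zero
    · exact absurd ⟨α + b, by rw [Order.succ_eq_add_one, add_assoc]⟩ hs
    · exact hβlim
  have hfs1 : fs (α + β) 1 = α + 1 := by
    rw [fs_add_of_OmegaO_dvd hβlim.ne_bot hβ α hαε hα]
    simpa using fs_OmegaO_opow_mul_of_isSuccLimit (a := 0) (θ := 1) hβlim hβ
  rw [hfs1, hstar 1 one_lt_OmegaO, hstar β hβ] at hfs
  refine (ThetaF_lt_ThetaF hX hγε (((add_lt_add_iff_left α).2 hζ).trans hγ) ?_).le.trans_eq
    hΘγ.symm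
  rw [← hΘγ, hstar ζ (hζ.trans hβ), hstar β hβ]
  exact max_lt ((le_max_left _ _).trans_lt hfs) (hζ.trans_le (le_max_right _ _))

lemma ThetaStarF_spec (hX : IsClubBelowOmega X) (hα : OmegaO ∣ α) (hα0 : α ≠ 0)
    (hβ : β < OmegaO) (hε : α + β < epsOmega) (hjump : α + β ∈ JUMPs X) :
    star (α + β) ≤ ThetaStarF X (α + β) ∧ ThetaStarF X (α + β) < ThetaF X (α + β) ∧
      ∀ ζ < β, ThetaF X (α + ζ) ≤ ThetaStarF X (α + β) := by
  by_cases hs : ∃ ζ, α + β = ζ + 1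
  · obtain ⟨b, rfl⟩ : ∃ b, β = b + 1 := by
      obtain ⟨ζ, hζ⟩ := hs
      rcases Ordinal.zero_or_succ_or_isSuccLimit β with rfl | ⟨b, rfl⟩ | hβlim
      · rw [add_zero] at hζ
        exact absurd (hζ ▸ isSuccLimit_of_OmegaO_dvd hα hα0) (Order.not_isSuccLimit_add_one ζ)
      · exact ⟨b, Order.succ_eq_add_one b⟩
      · exact absurd (hζ ▸ Ordinal.isSuccLimit_add α hβlim) (Order.not_isSuccLimit_add_one ζ)
    exact ThetaStarF_spec_of_succ hX hα hβ hε
  · have hfix : α + β ∈ FIXs X := by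
      rcases hjump with (h | h) | h
      · exact absurd (Ordinal.add_eq_zero_iff.1 h).1 hα0
      · exact absurd h hs
      · exact h
    exact ThetaStarF_spec_of_mem_FIXs hX hα hβ hfix hs

end ThetaStar

theorem stmt10_general (X : Set Ordinal) (hX : IsClubBelowOmega X)
    (αt α β : Ordinal) (hα : α = OmegaO * αt) (hα0 : 0 < α) (hβ : β < OmegaO)
    (htau : tau α < OmegaO) (hmem : α + β ∈ hatEps X) (hjump : α + β ∈ JUMPs X)
    (τs : ℕ → Ordinal) (hmono : StrictMono τs) (hsup : (⨆ n, τs n) = tau α) :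
    StrictMono (fun n => ThetaF X (fs α (τs n) + ThetaStarF X (α + β))) ∧
    (⨆ n, ThetaF X (fs α (τs n) + ThetaStarF X (α + β))) = ThetaF X (α + β) := by
  have hαdvd : OmegaO ∣ α := ⟨αt, hα⟩
  have hτlim : Order.IsSuccLimit (tau α) := hsup ▸ isSuccLimit_iSup_of_strictMono hmono
  have hαH : TauIsCountableLimit α := ⟨hα0.ne', le_self_add.trans_lt hmem.1, hτlim, htau⟩
  have hτs : ∀ n, τs n < tau α := fun n =>
    hsup ▸ (hmono (Nat.lt_succ_self n)).trans_le (le_ciSup Ordinal.bddAbove_of_small (n + 1))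
  obtain ⟨hstarT, hTΘ, hbelowT⟩ := ThetaStarF_spec hX hαdvd hα0.ne' hβ hmem.1 hjump
  set T := ThetaStarF X (α + β)
  have hTΩ : T < OmegaO := hTΘ.trans (ThetaF_lt_OmegaO hX _)
  have hαT : star α ≤ T := by
    rw [star_add_of_OmegaO_dvd α hαH.lt_epsOmega hαdvd β hβ] at hstarT
    exact (le_max_left _ _).trans hstarT
  have hτT : tau α ≤ T := hαH.tau_le_star.trans hαT
  refine strictMono_ThetaF_and_iSup_eq hX hmem.1
    (fun m n h => (hαH.fs_add_lt_fs hαdvd hTΩ (hmono h) (hτs n).le).trans_le le_self_add)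
    (fun n => (hαH.fs_tau ▸ hαH.fs_add_lt_fs hαdvd hTΩ (hτs n) le_rfl).trans_le le_self_add)
    (fun n => hαH.star_fs_add_eq hαdvd (hτs n).le
      ((Ordinal.omega0_le_of_isSuccLimit hτlim).trans hτT) hTΩ hαT ((hτs n).le.trans hτT))
    hstarT hTΘ fun ζ hζ => ?_
  rcases lt_or_ge ζ α with hζα | hαζ
  · obtain ⟨n, hn⟩ := hαH.exists_lt_fs_of_iSup_eq hsup ζ hζα
    exact Or.inl ⟨n, hn.trans_le le_self_add⟩
  · rw [← Ordinal.add_sub_cancel_of_le hαζ] at hζ ⊢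
    exact Or.inr (hbelowT _ ((add_lt_add_iff_left α).1 hζ))

/-- `Θ_X(α[τ_n] + Θ*(α+β)) ↗ Θ_X(α+β)` when `τ_n ↗ τ(α) < Ω`. -/
theorem stmt10 (X : Set Ordinal) (hX : IsClubBelowOmega X) (h0X : 0 ∉ X)
    (αt α β : Ordinal) (hα : α = OmegaO * αt) (hα0 : 0 < α) (hβ : β < OmegaO)
    (htau : tau α < OmegaO) (hmem : α + β ∈ hatEps X) (hjump : α + β ∈ JUMPs X)
    (τs : ℕ → Ordinal) (hmono : StrictMono τs) (hsup : (⨆ n, τs n) = tau α) :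
    StrictMono (fun n => ThetaF X (fs α (τs n) + ThetaStarF X (α + β))) ∧
    (⨆ n, ThetaF X (fs α (τs n) + ThetaStarF X (α + β))) = ThetaF X (α + β) :=
  stmt10_general X hX αt α β hα hα0 hβ htau hmem hjump τs hmono hsup
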